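/- arXiv:2505.11851 — 4 statements merged into one kernel-verified Lean document; each statement's English description precedes it below -/
import Mathlib

section
/- Let φ : (0,∞) → ℝ be C³ with |x·φ'''(x)/φ''(x)| ≤ k₃ for all x > 0. Then for every integer l ≤ 0, |φ''(1)|·2^(k₃(l−1)) ≤ sup_{1/2 ≤ r ≤ 2} |φ''(2^(−l) r)| ≤ |φ''(1)|·2^(−k₃(l−1)). -/
open Real Set

/-!
For `f = φ''` the hypothesis says that `t ↦ log |f (exp t)|`, whose derivative is
`x f'(x) / f(x)` at `x = exp t`, is `k`-Lipschitz. Hence `|f x|` differs from `|f 1|` by a factor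
at most `exp (k |log x|)`, and on the dyadic shell `2^(-l) [1/2, 2]` one has
`|log x| ≤ (1 - l) log 2`.
-/

theorem abs_log_abs_sub_log_abs_le_of_abs_mul_deriv_le {f f' : ℝ → ℝ} {k : ℝ}
    (hf : ∀ x ∈ Ioi (0:ℝ), HasDerivAt f (f' x) x)
    (hne : ∀ x ∈ Ioi (0:ℝ), f x ≠ 0)
    (hb : ∀ x ∈ Ioi (0:ℝ), |x * f' x| ≤ k * |f x|) {x y : ℝ} (hx : 0 < x) (hy : 0 < y) :
    |log |f x| - log (|f y|)| ≤ k * |log x - log y| := by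
  set G : ℝ → ℝ := fun t => log (f (exp t))
  have hG : ∀ t, HasDerivAt G (exp t * f' (exp t) / f (exp t)) t := fun t =>
    (((hf _ (exp_pos t)).comp t (hasDerivAt_exp t)).log (hne _ (exp_pos t))).congr_deriv
      (by rw [Function.comp_apply]; ring)
  have hG' : ∀ t, ‖exp t * f' (exp t) / f (exp t)‖ ≤ k := fun t => by
    rw [Real.norm_eq_abs, abs_div, div_le_iff₀ (abs_pos.mpr (hne _ (exp_pos t)))]
    exact hb _ (exp_pos t)
  have := convex_univ.norm_image_sub_le_of_norm_hasDerivWithin_le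
    (fun t _ => (hG t).hasDerivWithinAt) (fun t _ => hG' t) (mem_univ (log y)) (mem_univ (log x))
  simpa [G, exp_log hx, exp_log hy, log_abs] using this

theorem abs_mul_exp_neg_le_abs_and_abs_le_abs_mul_exp {f f' : ℝ → ℝ} {k L : ℝ} (hk : 0 ≤ k)
    (hf : ∀ x ∈ Ioi (0:ℝ), HasDerivAt f (f' x) x)
    (hne : ∀ x ∈ Ioi (0:ℝ), f x ≠ 0)
    (hb : ∀ x ∈ Ioi (0:ℝ), |x * f' x| ≤ k * |f x|) {x y : ℝ} (hx : 0 < x) (hy : 0 < y)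
    (hL : |log x - log y| ≤ L) :
    |f y| * exp (-(k * L)) ≤ |f x| ∧ |f x| ≤ |f y| * exp (k * L) := by
  have h := (abs_log_abs_sub_log_abs_le_of_abs_mul_deriv_le hf hne hb hx hy).trans
    (mul_le_mul_of_nonneg_left hL hk)
  have hexp : ∀ z, 0 < z → |f z| = exp (log |f z|) := fun z hz =>
    (exp_log (abs_pos.mpr (hne z hz))).symm
  rw [abs_le] at h
  rw [hexp x hx, hexp y hy, ← exp_add, ← exp_add, exp_le_exp, exp_le_exp]
  constructor <;> linarith

theorem abs_log_two_zpow_neg_mul_le {l : ℤ} (hl : l ≤ 0) {r : ℝ} (hr : r ∈ Icc (1/2 : ℝ) 2) :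
    |log ((2:ℝ) ^ (-l) * r)| ≤ (1 - l) * log 2 := by
  have hr₀ : 0 < r := lt_of_lt_of_le (by norm_num) hr.1
  have hlog2 : 0 ≤ log 2 := log_nonneg (by norm_num)
  have hlogr : |log r| ≤ log 2 := by
    refine abs_le.mpr ⟨?_, log_le_log hr₀ hr.2⟩
    have := log_le_log (by norm_num) hr.1
    rw [one_div, log_inv] at this
    linarith
  have hl' : (0:ℝ) ≤ -l := by exact_mod_cast neg_nonneg.mpr hl
  calc |log ((2:ℝ) ^ (-l) * r)| = |(-l : ℝ) * log 2 + log r| := by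
        rw [log_mul (zpow_pos two_pos _).ne' hr₀.ne', log_zpow, Int.cast_neg]
    _ ≤ |(-l : ℝ) * log 2| + |log r| := abs_add_le _ _
    _ ≤ (-l : ℝ) * log 2 + log 2 := by
        rw [abs_of_nonneg (mul_nonneg hl' hlog2)]
        linarith
    _ = (1 - l) * log 2 := by ring

theorem stmt_1_general (φ'' φ''' : ℝ → ℝ) (k₃ : ℝ) (hk₃ : 0 < k₃)
    (hd3 : ∀ x ∈ Ioi (0:ℝ), HasDerivAt φ'' (φ''' x) x)
    (hne : ∀ x ∈ Ioi (0:ℝ), φ'' x ≠ 0)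
    (hb : ∀ x ∈ Ioi (0:ℝ), |x * φ''' x| ≤ k₃ * |φ'' x|) :
    ∀ l : ℤ, l ≤ 0 →
      |φ'' 1| * (2:ℝ) ^ (k₃ * ((l:ℝ) - 1)) ≤
        sSup ((fun r : ℝ => |φ'' ((2:ℝ) ^ (-l) * r)|) '' Icc (1/2) 2) ∧
      sSup ((fun r : ℝ => |φ'' ((2:ℝ) ^ (-l) * r)|) '' Icc (1/2) 2) ≤
        |φ'' 1| * (2:ℝ) ^ (-(k₃ * ((l:ℝ) - 1))) := by
  intro l hl
  have hpos : ∀ r ∈ Icc (1/2 : ℝ) 2, 0 < (2:ℝ) ^ (-l) * r := fun r hr =>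
    mul_pos (zpow_pos two_pos _) (lt_of_lt_of_le (by norm_num) hr.1)
  have hbounds : ∀ r ∈ Icc (1/2 : ℝ) 2,
      |φ'' 1| * (2:ℝ) ^ (k₃ * ((l:ℝ) - 1)) ≤ |φ'' ((2:ℝ) ^ (-l) * r)| ∧
      |φ'' ((2:ℝ) ^ (-l) * r)| ≤ |φ'' 1| * (2:ℝ) ^ (-(k₃ * ((l:ℝ) - 1))) := fun r hr => by
    have h := abs_mul_exp_neg_le_abs_and_abs_le_abs_mul_exp hk₃.le hd3 hne hb (hpos r hr) one_pos
      (by simpa using abs_log_two_zpow_neg_mul_le hl hr)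
    rwa [rpow_def_of_pos two_pos, rpow_def_of_pos two_pos,
      show log 2 * (k₃ * (l - 1)) = -(k₃ * ((1 - l) * log 2)) by ring,
      show log 2 * -(k₃ * (l - 1)) = k₃ * ((1 - l) * log 2) by ring]
  have h1 : (1:ℝ) ∈ Icc (1/2 : ℝ) 2 := by norm_num
  have hbdd : BddAbove ((fun r : ℝ => |φ'' ((2:ℝ) ^ (-l) * r)|) '' Icc (1/2) 2) :=
    ⟨_, forall_mem_image.mpr fun r hr => (hbounds r hr).2⟩
  exact ⟨(hbounds 1 h1).1.trans (le_csSup hbdd (mem_image_of_mem _ h1)),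
    csSup_le (Nonempty.image _ ⟨1, h1⟩)
      (forall_mem_image.mpr fun r hr => (hbounds r hr).2)⟩

theorem stmt_1 (φ φ' φ'' φ''' : ℝ → ℝ) (k₃ : ℝ) (hk₃ : 0 < k₃)
    (hd1 : ∀ x ∈ Ioi (0:ℝ), HasDerivAt φ (φ' x) x)
    (hd2 : ∀ x ∈ Ioi (0:ℝ), HasDerivAt φ' (φ'' x) x)
    (hd3 : ∀ x ∈ Ioi (0:ℝ), HasDerivAt φ'' (φ''' x) x)
    (hcont : ContinuousOn φ''' (Ioi 0))
    (hne : ∀ x ∈ Ioi (0:ℝ), φ'' x ≠ 0)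
    (hb : ∀ x ∈ Ioi (0:ℝ), |x * φ''' x| ≤ k₃ * |φ'' x|) :
    ∀ l : ℤ, l ≤ 0 →
      |φ'' 1| * (2:ℝ) ^ (k₃ * ((l:ℝ) - 1)) ≤
        sSup ((fun r : ℝ => |φ'' ((2:ℝ) ^ (-l) * r)|) '' Icc (1/2) 2) ∧
      sSup ((fun r : ℝ => |φ'' ((2:ℝ) ^ (-l) * r)|) '' Icc (1/2) 2) ≤
        |φ'' 1| * (2:ℝ) ^ (-(k₃ * ((l:ℝ) - 1))) :=
  stmt_1_general φ'' φ''' k₃ hk₃ hd3 hne hb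
end

section
/- The function φ(r) = r² e^(−r) sinh(r) on (0,∞) satisfies: φ'(r)·φ''(r) > 0 for all r > 0, there exist constants 0 < k₁ ≤ k₂ with k₁ ≤ r·φ''(r)/φ'(r) ≤ k₂ for all r > 0, and there exists k₃ > 0 with |r·φ'''(r)/φ''(r)| ≤ k₃ for all r > 0. -/
/-! Since `e^(-r) sinh r = (1 - e^(-2r))/2`, every derivative of `φ` is a polynomial plus a
polynomial times `e^(-2r)`. Multiplying the cubic Taylor bound
`1 + 2r + 2r² + 4r³/3 ≤ e^(2r)` by a suitable constant (or by `r`) and subtracting it, each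
required inequality becomes positivity of a polynomial in `r` times `e^(-2r)`; the constants
`1/2`, `3`, `8` are chosen so that these polynomials have no positive root. -/

open Real

lemma cubic_taylor_mul_exp_neg_two_mul_le_one {r : ℝ} (hr : 0 ≤ r) :
    (1 + 2 * r + 2 * r ^ 2 + 4 * r ^ 3 / 3) * exp (-(2 * r)) ≤ 1 := by
  have hTaylor := sum_le_exp_of_nonneg (mul_nonneg zero_le_two hr) 4
  simp only [Finset.sum_range_succ, Finset.sum_range_zero, Nat.factorial] at hTaylor
  rw [exp_neg, ← div_eq_mul_inv, div_le_one (exp_pos _)]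
  norm_num at hTaylor
  linarith

lemma HasDerivAt.mul_exp_neg_two_mul {f : ℝ → ℝ} {f' r : ℝ} (hf : HasDerivAt f f' r) :
    HasDerivAt (fun x => f x * Real.exp (-(2 * x))) ((f' - 2 * f r) * Real.exp (-(2 * r))) r := by
  have hexp : HasDerivAt (fun x => Real.exp (-(2 * x))) (Real.exp (-(2 * r)) * -2) r :=
    (((hasDerivAt_id r).const_mul 2).neg.congr_deriv (by simp)).exp
  exact (hf.mul hexp).congr_deriv (by ring)

noncomputable def profile (r : ℝ) : ℝ := r ^ 2 * exp (-r) * sinh r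

lemma profile_eq (x : ℝ) : profile x = (x ^ 2 - x ^ 2 * exp (-(2 * x))) / 2 := by
  have hexp : exp (-(2 * x)) = exp (-x) * exp (-x) := by rw [← exp_add]; ring_nf
  rw [profile, sinh_eq, hexp, exp_neg]
  field_simp [exp_ne_zero]

lemma deriv_profile : deriv profile = fun r => r + (r ^ 2 - r) * exp (-(2 * r)) := by
  funext r
  have hsq : HasDerivAt (fun x : ℝ => x ^ 2) (2 * r) r := by simpa using hasDerivAt_pow 2 r
  rw [funext profile_eq]
  exact (((hsq.sub hsq.mul_exp_neg_two_mul).div_const 2).congr_deriv (by ring)).deriv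

lemma deriv2_profile :
    deriv (deriv profile) = fun r => 1 + (-2 * r ^ 2 + 4 * r - 1) * exp (-(2 * r)) := by
  funext r
  have hpoly : HasDerivAt (fun x : ℝ => x ^ 2 - x) (2 * r - 1) r := by
    simpa using (hasDerivAt_pow 2 r).fun_sub (hasDerivAt_id' r)
  rw [deriv_profile]
  exact (((hasDerivAt_id r).add hpoly.mul_exp_neg_two_mul).congr_deriv (by simp; ring)).deriv

lemma deriv3_profile :
    deriv (deriv (deriv profile)) = fun r => (4 * r ^ 2 - 12 * r + 6) * exp (-(2 * r)) := by
  funext r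
  have hpoly : HasDerivAt (fun x : ℝ => -2 * x ^ 2 + 4 * x - 1) (-4 * r + 4) r := by
    have := (((hasDerivAt_pow 2 r).const_mul (-2)).add ((hasDerivAt_id' r).const_mul 4)).sub_const 1
    exact this.congr_deriv (by push_cast; ring)
  rw [deriv2_profile]
  exact (hpoly.mul_exp_neg_two_mul.const_add 1 |>.congr_deriv (by ring)).deriv

section Bounds

variable {r : ℝ} (hr : 0 < r)
include hr

lemma deriv_profile_pos : 0 < deriv profile r := by
  have hbound := cubic_taylor_mul_exp_neg_two_mul_le_one hr.le
  have hE := exp_pos (-(2 * r))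
  rw [deriv_profile]
  nlinarith [mul_pos hr hE, mul_pos (pow_pos hr 2) hE, mul_pos (pow_pos hr 3) hE,
    mul_pos (pow_pos hr 4) hE]

lemma deriv2_profile_pos : 0 < deriv (deriv profile) r := by
  have hbound := cubic_taylor_mul_exp_neg_two_mul_le_one hr.le
  have hE := exp_pos (-(2 * r))
  rw [deriv2_profile]
  nlinarith [mul_pos hr hE, mul_pos (pow_pos hr 2) hE, mul_pos (pow_pos hr 3) hE,
    mul_pos (pow_pos hr 4) hE]

lemma deriv_profile_le_two_mul_deriv2 : deriv profile r ≤ 2 * (r * deriv (deriv profile) r) := by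
  have hbound := cubic_taylor_mul_exp_neg_two_mul_le_one hr.le
  have hE := exp_pos (-(2 * r))
  rw [deriv2_profile, deriv_profile]
  nlinarith [mul_pos hr hE, mul_pos (pow_pos hr 2) hE, mul_pos (pow_pos hr 3) hE,
    mul_pos (pow_pos hr 4) hE]

lemma mul_deriv2_profile_le_three_mul : r * deriv (deriv profile) r ≤ 3 * deriv profile r := by
  have hbound := cubic_taylor_mul_exp_neg_two_mul_le_one hr.le
  have hE := exp_pos (-(2 * r))
  rw [deriv2_profile, deriv_profile]
  nlinarith [mul_pos hr hE, mul_pos (pow_pos hr 2) hE, mul_pos (pow_pos hr 3) hE,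
    mul_pos (pow_pos hr 4) hE]

lemma abs_mul_deriv3_profile_le :
    |r * deriv (deriv (deriv profile)) r| ≤ 8 * deriv (deriv profile) r := by
  have hbound := cubic_taylor_mul_exp_neg_two_mul_le_one hr.le
  have hE := exp_pos (-(2 * r))
  rw [deriv3_profile, deriv2_profile, abs_le]
  constructor
  · nlinarith [mul_pos hr hE, mul_pos (pow_pos hr 2) hE, mul_pos (pow_pos hr 3) hE,
      mul_pos (pow_pos hr 4) hE]
  · nlinarith [mul_pos hr hE, mul_pos (pow_pos hr 2) hE, mul_pos (pow_pos hr 3) hE,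
      mul_pos (pow_pos hr 4) hE]

end Bounds

theorem stmt_2 :
    let φ : ℝ → ℝ := fun r => r ^ 2 * Real.exp (-r) * Real.sinh r
    (∀ r > (0:ℝ), deriv φ r * deriv (deriv φ) r > 0) ∧
    (∃ k₁ k₂ : ℝ, 0 < k₁ ∧ k₁ ≤ k₂ ∧ ∀ r > (0:ℝ),
      k₁ ≤ r * deriv (deriv φ) r / deriv φ r ∧
      r * deriv (deriv φ) r / deriv φ r ≤ k₂) ∧
    (∃ k₃ : ℝ, 0 < k₃ ∧ ∀ r > (0:ℝ),
      |r * deriv (deriv (deriv φ)) r / deriv (deriv φ) r| ≤ k₃) := by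
  intro φ
  rw [show φ = profile from rfl]
  refine ⟨fun r hr => mul_pos (deriv_profile_pos hr) (deriv2_profile_pos hr),
    ⟨1 / 2, 3, by norm_num, by norm_num, fun r hr => ⟨?_, ?_⟩⟩, ⟨8, by norm_num, fun r hr => ?_⟩⟩
  · rw [le_div_iff₀ (deriv_profile_pos hr)]
    linarith [deriv_profile_le_two_mul_deriv2 hr]
  · rw [div_le_iff₀ (deriv_profile_pos hr)]
    exact mul_deriv2_profile_le_three_mul hr
  · rw [abs_div, abs_of_pos (deriv2_profile_pos hr), div_le_iff₀ (deriv2_profile_pos hr)]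
    exact abs_mul_deriv3_profile_le hr
end

section
/- Let λ > 0, ε > 0, β > 0, l ∈ ℤ, and let g be as in Lemma 3.1 with the stated hypotheses on φ. Set ε₁ = min{ε/(6β(β+1)2^(β+2)), ε/(4β(β+1)(β+2)2^(β+3)), ε/8} and ε₂ = ε/8. If |g_r(r₀,θ₀)| ≥ ελ at some point (r₀,θ₀) ∈ [1/2,2]×[0,π], and (r,θ) satisfies |r−r₀| < ε₁, |θ−θ₀| < ε₂ (with (r,θ) in the domain), then |g_r(r,θ)| ≥ ελ/2. -/
/-!
Differentiating in `r`, `g_r = a cos θ + ξ c φ'(c r) - b β r^(-β-1)` with `c = 2^(-l)`,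
`a = c |ξ'|`, `b = 2^(βl)`. On `[1/2, 2]` each term is Lipschitz with a constant controlled by
`λ`: `cos` is 1-Lipschitz, `φ'` has constant `sup |φ''|` on `[c/2, 2c]` by the mean value
theorem, and `r^(-β-1)` has constant `(β+1) 2^(β+2)`. Hence
`|g_r(r,θ) - g_r(r₀,θ₀)| ≤ λ|θ-θ₀| + (β(β+1)2^(β+2) + 1) λ |r-r₀| ≤ 5ελ/12 < ελ/2`.
-/

open Real Set

lemma abs_sub_le_sSup_abs_deriv_mul {f f' : ℝ → ℝ} {a b x y : ℝ}
    (hf : ∀ t ∈ Icc a b, HasDerivAt f (f' t) t) (hf' : ContinuousOn f' (Icc a b))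
    (hx : x ∈ Icc a b) (hy : y ∈ Icc a b) :
    |f y - f x| ≤ sSup ((fun t => |f' t|) '' Icc a b) * |y - x| := by
  have hbdd : BddAbove ((fun t => |f' t|) '' Icc a b) :=
    (isCompact_Icc.image_of_continuousOn hf'.abs).bddAbove
  simpa using (convex_Icc a b).norm_image_sub_le_of_norm_hasDerivWithin_le
    (fun t ht => (hf t ht).hasDerivWithinAt) (fun t ht => le_csSup hbdd ⟨t, ht, rfl⟩) hx hy

lemma abs_rpow_neg_sub_rpow_neg_le {p x y : ℝ} (hp : 0 ≤ p) (hx : 1 / 2 ≤ x) (hy : 1 / 2 ≤ y) :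
    |x ^ (-p) - y ^ (-p)| ≤ p * 2 ^ (p + 1) * |x - y| := by
  have hderiv : ∀ t ∈ Ici (1 / 2 : ℝ), ‖-p * t ^ (-p - 1)‖ ≤ p * 2 ^ (p + 1) := by
    intro t ht
    have hpow : t ^ (-p - 1) ≤ 2 ^ (p + 1) := calc
      t ^ (-p - 1) ≤ (1 / 2) ^ (-p - 1) := rpow_le_rpow_of_nonpos (by norm_num) ht (by linarith)
      _ = 2 ^ (p + 1) := by
        rw [one_div, inv_rpow zero_le_two, ← rpow_neg zero_le_two, neg_sub, sub_neg_eq_add,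
          add_comm]
    rw [norm_mul, norm_neg, Real.norm_of_nonneg hp,
      Real.norm_of_nonneg (rpow_nonneg (le_trans (by norm_num) ht) _)]
    exact mul_le_mul_of_nonneg_left hpow hp
  simpa using (convex_Ici (1 / 2 : ℝ)).norm_image_sub_le_of_norm_hasDerivWithin_le
    (fun t ht => (hasDerivAt_rpow_const (p := -p)
      (Or.inl (lt_of_lt_of_le (by norm_num) ht).ne')).hasDerivWithinAt) hderiv hy hx

lemma hasDerivAt_phase {φ φ' : ℝ → ℝ} (hφ : ∀ x > 0, HasDerivAt φ (φ' x) x)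
    {a b c ξ β θ s : ℝ} (hc : 0 < c) (hs : 0 < s) :
    HasDerivAt (fun r => a * r * cos θ + ξ * φ (c * r) + b * r ^ (-β))
      (a * cos θ + ξ * (φ' (c * s) * c) + b * (-β * s ^ (-β - 1))) s := by
  have hlin : HasDerivAt (fun r => a * r * cos θ) (a * cos θ) s := by
    simpa using ((hasDerivAt_id s).const_mul a).mul_const (cos θ)
  have hcomp : HasDerivAt (fun r => φ (c * r)) (φ' (c * s) * c) s :=
    (hφ (c * s) (mul_pos hc hs)).comp s (by simpa using (hasDerivAt_id s).const_mul c)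
  exact (hlin.add (hcomp.const_mul ξ)).add
    ((hasDerivAt_rpow_const (p := -β) (Or.inl hs.ne')).const_mul b)

lemma abs_phase_deriv_sub_le {φ' : ℝ → ℝ} {a b c ξ β M Λ r r₀ θ θ₀ : ℝ}
    (ha : 0 ≤ a) (hb : 0 ≤ b) (hc : 0 ≤ c) (hβ : 0 ≤ β) (hr : 1 / 2 ≤ r) (hr₀ : 1 / 2 ≤ r₀)
    (hφ' : |φ' (c * r) - φ' (c * r₀)| ≤ M * |c * r - c * r₀|)
    (ha_le : a ≤ Λ) (hM_le : |ξ| * c ^ 2 * M ≤ Λ) (hb_le : b ≤ Λ) :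
    |(a * cos θ + ξ * (φ' (c * r) * c) + b * (-β * r ^ (-β - 1))) -
        (a * cos θ₀ + ξ * (φ' (c * r₀) * c) + b * (-β * r₀ ^ (-β - 1)))|
      ≤ Λ * |θ - θ₀| + (β * (β + 1) * 2 ^ (β + 2) + 1) * Λ * |r - r₀| := by
  have hcos : |a * cos θ - a * cos θ₀| ≤ Λ * |θ - θ₀| := by
    rw [← mul_sub, abs_mul, abs_of_nonneg ha]
    exact mul_le_mul ha_le (abs_cos_sub_cos_le θ θ₀) (abs_nonneg _) (ha.trans ha_le)
  have hφ : |ξ * (φ' (c * r) * c) - ξ * (φ' (c * r₀) * c)| ≤ Λ * |r - r₀| := by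
    have hscale : |c * r - c * r₀| = c * |r - r₀| := by rw [← mul_sub, abs_mul, abs_of_nonneg hc]
    calc |ξ * (φ' (c * r) * c) - ξ * (φ' (c * r₀) * c)|
        = |ξ| * c * |φ' (c * r) - φ' (c * r₀)| := by
          rw [← abs_of_nonneg hc, ← abs_mul, ← abs_mul, abs_of_nonneg hc]; ring_nf
      _ ≤ |ξ| * c * (M * |c * r - c * r₀|) :=
          mul_le_mul_of_nonneg_left hφ' (mul_nonneg (abs_nonneg ξ) hc)
      _ = |ξ| * c ^ 2 * M * |r - r₀| := by rw [hscale]; ring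
      _ ≤ Λ * |r - r₀| := mul_le_mul_of_nonneg_right hM_le (abs_nonneg _)
  have hpow : |b * (-β * r ^ (-β - 1)) - b * (-β * r₀ ^ (-β - 1))| ≤
      β * (β + 1) * 2 ^ (β + 2) * Λ * |r - r₀| := by
    have hrpow := abs_rpow_neg_sub_rpow_neg_le (p := β + 1) (by linarith) hr hr₀
    rw [neg_add', add_assoc, one_add_one_eq_two] at hrpow
    calc |b * (-β * r ^ (-β - 1)) - b * (-β * r₀ ^ (-β - 1))|
        = b * (β * |r ^ (-β - 1) - r₀ ^ (-β - 1)|) := by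
          rw [← mul_sub, ← mul_sub, abs_mul, abs_mul, abs_neg, abs_of_nonneg hb,
            abs_of_nonneg hβ]
      _ ≤ Λ * (β * ((β + 1) * 2 ^ (β + 2) * |r - r₀|)) :=
          mul_le_mul hb_le (mul_le_mul_of_nonneg_left hrpow hβ) (by positivity) (hb.trans hb_le)
      _ = β * (β + 1) * 2 ^ (β + 2) * Λ * |r - r₀| := by ring
  calc _ = |(a * cos θ - a * cos θ₀) + (ξ * (φ' (c * r) * c) - ξ * (φ' (c * r₀) * c)) +
        (b * (-β * r ^ (-β - 1)) - b * (-β * r₀ ^ (-β - 1)))| := by ring_nf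
    _ ≤ Λ * |θ - θ₀| + Λ * |r - r₀| + β * (β + 1) * 2 ^ (β + 2) * Λ * |r - r₀| :=
        (abs_add_three _ _ _).trans (add_le_add (add_le_add hcos hφ) hpow)
    _ = _ := by ring

lemma zpow_neg_mul_mem_Icc {l : ℤ} {s : ℝ} (hs : s ∈ Icc (1 / 2 : ℝ) 2) :
    (2 : ℝ) ^ (-l) * s ∈ Icc ((2 : ℝ) ^ (-l - 1)) ((2 : ℝ) ^ (-l + 1)) := by
  have h2l : (0 : ℝ) ≤ 2 ^ (-l) := by positivity
  rw [zpow_sub₀ two_ne_zero, zpow_add₀ two_ne_zero, zpow_one, div_eq_mul_one_div]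
  exact ⟨mul_le_mul_of_nonneg_left hs.1 h2l, mul_le_mul_of_nonneg_left hs.2 h2l⟩

theorem stmt_9_general (n : ℕ) (β ε : ℝ) (l : ℤ)
    (ξ' : EuclideanSpace ℝ (Fin n)) (ξlast : ℝ)
    (φ φ' φ'' φ''' : ℝ → ℝ)
    (hβ : 0 < β)
    (hd1 : ∀ x > (0:ℝ), HasDerivAt φ (φ' x) x)
    (hd2 : ∀ x > (0:ℝ), HasDerivAt φ' (φ'' x) x)
    (hd3 : ∀ x > (0:ℝ), HasDerivAt φ'' (φ''' x) x)
    (hε0 : 0 < ε)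
    (lam : ℝ)
    (hlam : lam = max (max ((2:ℝ) ^ (β * (l:ℝ))) ((2:ℝ) ^ (-l) * ‖ξ'‖))
      (max (|ξlast| * (2:ℝ) ^ (-2 * l) *
              sSup ((fun r : ℝ => |φ'' r|) '' Set.Icc ((2:ℝ) ^ (-l - 1)) ((2:ℝ) ^ (-l + 1))))
           (|ξlast| * (2:ℝ) ^ (-3 * l) *
              sSup ((fun r : ℝ => |φ''' r|) '' Set.Icc ((2:ℝ) ^ (-l - 1)) ((2:ℝ) ^ (-l + 1))))))
    (g : ℝ → ℝ → ℝ)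
    (hg : ∀ r θ : ℝ, g r θ = (2:ℝ) ^ (-l) * ‖ξ'‖ * r * Real.cos θ +
      ξlast * φ ((2:ℝ) ^ (-l) * r) + (2:ℝ) ^ (β * (l:ℝ)) * r ^ (-β))
    (ε₁ ε₂ : ℝ)
    (hε₁ : ε₁ = min (min (ε / (6 * β * (β + 1) * (2:ℝ) ^ (β + 2)))
      (ε / (4 * β * (β + 1) * (β + 2) * (2:ℝ) ^ (β + 3)))) (ε / 8))
    (hε₂ : ε₂ = ε / 8)
    (r₀ θ₀ r θ : ℝ)
    (hr₀ : r₀ ∈ Set.Icc (1/2 : ℝ) 2)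
    (hr : r ∈ Set.Icc (1/2 : ℝ) 2)
    (hclose_r : |r - r₀| < ε₁) (hclose_θ : |θ - θ₀| < ε₂)
    (h₀ : ε * lam ≤ |deriv (fun r' => g r' θ₀) r₀|) :
    ε * lam / 2 ≤ |deriv (fun r' => g r' θ) r| := by
  set c : ℝ := (2 : ℝ) ^ (-l)
  set b : ℝ := (2 : ℝ) ^ (β * (l : ℝ))
  set M := sSup ((fun r : ℝ => |φ'' r|) '' Icc ((2 : ℝ) ^ (-l - 1)) ((2 : ℝ) ^ (-l + 1)))
  have hc : 0 < c := zpow_pos two_pos _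
  have hb : 0 < b := rpow_pos_of_pos two_pos _
  have hderiv : ∀ s ∈ Icc (1 / 2 : ℝ) 2, ∀ θ', deriv (fun r' => g r' θ') s =
      c * ‖ξ'‖ * cos θ' + ξlast * (φ' (c * s) * c) + b * (-β * s ^ (-β - 1)) := by
    intro s hs θ'
    simp only [hg]
    exact (hasDerivAt_phase hd1 hc (by linarith [hs.1])).deriv
  have hb_le : b ≤ lam := hlam ▸ (le_max_left _ _).trans (le_max_left _ _)
  have ha_le : c * ‖ξ'‖ ≤ lam := hlam ▸ (le_max_right _ _).trans (le_max_left _ _)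
  have hM_le : |ξlast| * c ^ 2 * M ≤ lam := by
    have hc2 : c ^ 2 = (2 : ℝ) ^ (-2 * l) := by rw [← zpow_natCast, ← zpow_mul]; ring_nf
    exact hc2 ▸ hlam ▸ (le_max_left _ _).trans (le_max_right _ _)
  have hφ' : |φ' (c * r) - φ' (c * r₀)| ≤ M * |c * r - c * r₀| := by
    have hpos : ∀ t ∈ Icc ((2 : ℝ) ^ (-l - 1)) ((2 : ℝ) ^ (-l + 1)), 0 < t :=
      fun t ht => (zpow_pos two_pos _).trans_le ht.1
    exact abs_sub_le_sSup_abs_deriv_mul (fun t ht => hd2 t (hpos t ht))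
      (fun t ht => (hd3 t (hpos t ht)).continuousAt.continuousWithinAt)
      (zpow_neg_mul_mem_Icc hr₀) (zpow_neg_mul_mem_Icc hr)
  have hdiff := abs_phase_deriv_sub_le (θ := θ) (θ₀ := θ₀)
    (mul_nonneg hc.le (norm_nonneg ξ')) hb.le hc.le hβ.le hr.1 hr₀.1 hφ' ha_le hM_le hb_le
  rw [← hderiv r hr θ, ← hderiv r₀ hr₀ θ₀, abs_sub_comm] at hdiff
  have hθ8 : |θ - θ₀| ≤ ε / 8 := hε₂ ▸ hclose_θ.le
  have hr8 : |r - r₀| ≤ ε / 8 := hclose_r.le.trans (hε₁ ▸ min_le_right _ _)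
  have hr6 : β * (β + 1) * 2 ^ (β + 2) * |r - r₀| ≤ ε / 6 := by
    have := hclose_r.le.trans (hε₁ ▸ (min_le_left _ _).trans (min_le_left _ _))
    rw [le_div_iff₀ (by positivity)] at this
    linarith
  have hlam0 : 0 < lam := hb.trans_le hb_le
  linarith [mul_pos hε0 hlam0,
    abs_sub_abs_le_abs_sub (deriv (fun r' => g r' θ₀) r₀) (deriv (fun r' => g r' θ) r),
    mul_le_mul_of_nonneg_left hθ8 hlam0.le, mul_le_mul_of_nonneg_left hr8 hlam0.le,
    mul_le_mul_of_nonneg_left hr6 hlam0.le]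

theorem stmt_9 (n : ℕ) (β k₁ k₂ k₃ ε : ℝ) (l : ℤ)
    (ξ' : EuclideanSpace ℝ (Fin n)) (ξlast : ℝ)
    (φ φ' φ'' φ''' : ℝ → ℝ)
    (hβ : 0 < β)
    (hd1 : ∀ x > (0:ℝ), HasDerivAt φ (φ' x) x)
    (hd2 : ∀ x > (0:ℝ), HasDerivAt φ' (φ'' x) x)
    (hd3 : ∀ x > (0:ℝ), HasDerivAt φ'' (φ''' x) x)
    (hcont : ContinuousOn φ''' (Set.Ioi 0))
    (hsign : ∀ x > (0:ℝ), φ' x * φ'' x > 0)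
    (hk₁ : 0 < k₁) (hk₁₂ : k₁ ≤ k₂)
    (hbd : ∀ x > (0:ℝ), k₁ ≤ x * φ'' x / φ' x ∧ x * φ'' x / φ' x ≤ k₂)
    (hk₃ : 0 < k₃)
    (hbd3 : ∀ x > (0:ℝ), |x * φ''' x / φ'' x| ≤ k₃)
    (hε0 : 0 < ε)
    (hε : ε < min (min (1 / (2 * Real.sqrt 2)) (1 / (4 * k₂ * (3 * β + 7))))
      (min (β / ((4 + 3 * k₂) * (2:ℝ) ^ β)) (1 / (8 * k₂ * k₃ * (3 * β + 7)))))
    (lam : ℝ)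
    (hlam : lam = max (max ((2:ℝ) ^ (β * (l:ℝ))) ((2:ℝ) ^ (-l) * ‖ξ'‖))
      (max (|ξlast| * (2:ℝ) ^ (-2 * l) *
              sSup ((fun r : ℝ => |φ'' r|) '' Set.Icc ((2:ℝ) ^ (-l - 1)) ((2:ℝ) ^ (-l + 1))))
           (|ξlast| * (2:ℝ) ^ (-3 * l) *
              sSup ((fun r : ℝ => |φ''' r|) '' Set.Icc ((2:ℝ) ^ (-l - 1)) ((2:ℝ) ^ (-l + 1))))))
    (g : ℝ → ℝ → ℝ)
    (hg : ∀ r θ : ℝ, g r θ = (2:ℝ) ^ (-l) * ‖ξ'‖ * r * Real.cos θ +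
      ξlast * φ ((2:ℝ) ^ (-l) * r) + (2:ℝ) ^ (β * (l:ℝ)) * r ^ (-β))
    (ε₁ ε₂ : ℝ)
    (hε₁ : ε₁ = min (min (ε / (6 * β * (β + 1) * (2:ℝ) ^ (β + 2)))
      (ε / (4 * β * (β + 1) * (β + 2) * (2:ℝ) ^ (β + 3)))) (ε / 8))
    (hε₂ : ε₂ = ε / 8)
    (r₀ θ₀ r θ : ℝ)
    (hr₀ : r₀ ∈ Set.Icc (1/2 : ℝ) 2) (hθ₀ : θ₀ ∈ Set.Icc (0:ℝ) Real.pi)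
    (hr : r ∈ Set.Icc (1/2 : ℝ) 2) (hθ : θ ∈ Set.Icc (0:ℝ) Real.pi)
    (hclose_r : |r - r₀| < ε₁) (hclose_θ : |θ - θ₀| < ε₂)
    (h₀ : ε * lam ≤ |deriv (fun r' => g r' θ₀) r₀|) :
    ε * lam / 2 ≤ |deriv (fun r' => g r' θ) r| :=
  stmt_9_general n β ε l ξ' ξlast φ φ' φ'' φ''' hβ hd1 hd2 hd3 hε0 lam hlam g hg ε₁ ε₂ hε₁ hε₂ r₀ θ₀
    r θ hr₀ hr hclose_r hclose_θ h₀
end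

section
/- Under the same setup, if |g_rr(r₀,θ₀)| ≥ ελ at some (r₀,θ₀) ∈ [1/2,2]×[0,π], then |g_rr(r,θ)| ≥ ελ/2 for all (r,θ) in [1/2,2]×[0,π] with |r−r₀| < ε₁ and |θ−θ₀| < ε₂, where ε₁ = min{ε/(6β(β+1)2^(β+2)), ε/(4β(β+1)(β+2)2^(β+3)), ε/8} and ε₂ = ε/8. -/
/-!
The second radial derivative `g_rr` does not depend on `θ`, so only the radial distance matters.
On `[1/2, 2]` its derivative `g_rrr` is bounded by `λ (1 + β(β+1)(β+2) 2^(β+3))`: the `φ'''` term by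
the last entry of `λ`, the power term by `2^(βl) ≤ λ` together with `r^(-β-3) ≤ 2^(β+3)`.
The choice of `ε₁` makes the mean value theorem move `g_rr` by at most `3ελ/8 < ελ/2`.
-/

open Set

lemma abs_le_abs_add_mul_of_hasDerivWithinAt {f f' : ℝ → ℝ} {s : Set ℝ} {C x y : ℝ}
    (hs : Convex ℝ s) (hf : ∀ z ∈ s, HasDerivWithinAt f (f' z) s z)
    (hC : ∀ z ∈ s, |f' z| ≤ C) (hx : x ∈ s) (hy : y ∈ s) :
    |f x| ≤ |f y| + C * |x - y| := by
  have := hs.norm_image_sub_le_of_norm_hasDerivWithin_le hf hC hy hx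
  simp only [Real.norm_eq_abs] at this
  linarith [abs_sub_abs_le_abs_sub (f x) (f y)]

lemma rpow_neg_le_two_rpow {x p : ℝ} (hx : 1 / 2 ≤ x) (hp : 0 ≤ p) : x ^ (-p) ≤ 2 ^ p := by
  rw [Real.rpow_neg (by linarith), ← Real.inv_rpow (by linarith)]
  exact Real.rpow_le_rpow (by positivity) (by rw [inv_le_comm₀ (by linarith) two_pos]; linarith) hp

lemma two_zpow_mul_mem_Icc (l : ℤ) {x : ℝ} (hx : x ∈ Icc (1 / 2 : ℝ) 2) :
    (2 : ℝ) ^ (-l) * x ∈ Icc ((2 : ℝ) ^ (-l - 1)) ((2 : ℝ) ^ (-l + 1)) := by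
  have h : (0 : ℝ) < 2 ^ (-l) := by positivity
  rw [zpow_sub₀ two_ne_zero, zpow_add₀ two_ne_zero, zpow_one]
  constructor <;> nlinarith [hx.1, hx.2]

lemma hasDerivAt_mul_comp_mul_add_mul_rpow {φ φ' : ℝ → ℝ} {a x : ℝ} (A B p : ℝ)
    (hφ : HasDerivAt φ (φ' (a * x)) (a * x)) (hx : 0 < x) :
    HasDerivAt (fun r => A * φ (a * r) + B * r ^ p)
      (A * a * φ' (a * x) + B * p * x ^ (p - 1)) x := by
  have h : HasDerivAt (fun r => A * φ (a * r) + B * r ^ p)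
      (A * (φ' (a * x) * (a * 1)) + B * (p * x ^ (p - 1))) x :=
    ((hφ.comp x ((hasDerivAt_id x).const_mul a)).const_mul A).add
      ((Real.hasDerivAt_rpow_const (Or.inl hx.ne')).const_mul B)
  convert h using 1
  ring

lemma deriv_deriv_mul_add_mul_comp_mul_add_mul_rpow_neg {φ φ' φ'' : ℝ → ℝ} {a x : ℝ}
    (ha : 0 < a) (hd1 : ∀ y > 0, HasDerivAt φ (φ' y) y) (hd2 : ∀ y > 0, HasDerivAt φ' (φ'' y) y)
    (c A B β : ℝ) (hx : 0 < x) :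
    deriv (deriv fun r => c * r + A * φ (a * r) + B * r ^ (-β)) x =
      A * a ^ 2 * φ'' (a * x) + B * (β * (β + 1)) * x ^ (-(β + 2)) := by
  have hfirst : deriv (fun r => c * r + A * φ (a * r) + B * r ^ (-β)) =ᶠ[nhds x]
      fun r => c + (A * a * φ' (a * r) + B * -β * r ^ (-β - 1)) := by
    filter_upwards [Ioi_mem_nhds hx] with y hy
    have hsplit : (fun r => c * r + A * φ (a * r) + B * r ^ (-β)) =
        fun r => c * r + (A * φ (a * r) + B * r ^ (-β)) := funext fun r => add_assoc _ _ _
    have h : HasDerivAt (fun r => c * r + (A * φ (a * r) + B * r ^ (-β)))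
        (c * 1 + (A * a * φ' (a * y) + B * -β * y ^ (-β - 1))) y :=
      ((hasDerivAt_id y).const_mul c).add
        (hasDerivAt_mul_comp_mul_add_mul_rpow A B (-β) (hd1 _ (mul_pos ha hy)) hy)
    rw [hsplit, h.deriv, mul_one]
  have hsecond : HasDerivAt (fun r => c + (A * a * φ' (a * r) + B * -β * r ^ (-β - 1)))
      (0 + (A * a * a * φ'' (a * x) + B * -β * (-β - 1) * x ^ (-β - 1 - 1))) x :=
    (hasDerivAt_const x c).add (hasDerivAt_mul_comp_mul_add_mul_rpow
      (A * a) (B * -β) (-β - 1) (hd2 _ (mul_pos ha hx)) hx)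
  rw [hfirst.deriv_eq, hsecond.deriv, show -β - 1 - 1 = -(β + 2) by ring]
  ring

lemma abs_le_abs_add_mul_of_mem_Icc_mul_comp_mul_add_mul_rpow_neg {ψ ψ' : ℝ → ℝ}
    {a A B q C x y : ℝ} (ha : 0 < a) (hψ : ∀ z > 0, HasDerivAt ψ (ψ' z) z)
    (hC : ∀ z ∈ Icc (1 / 2 : ℝ) 2, |A * a * ψ' (a * z)| ≤ C) (hB : 0 ≤ B) (hq : 0 ≤ q)
    (hx : x ∈ Icc (1 / 2 : ℝ) 2) (hy : y ∈ Icc (1 / 2 : ℝ) 2) :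
    |A * ψ (a * x) + B * x ^ (-q)| ≤
      |A * ψ (a * y) + B * y ^ (-q)| + (C + B * q * 2 ^ (q + 1)) * |x - y| := by
  refine abs_le_abs_add_mul_of_hasDerivWithinAt (f := fun r => A * ψ (a * r) + B * r ^ (-q))
    (f' := fun z => A * a * ψ' (a * z) + B * -q * z ^ (-q - 1))
    (convex_Icc _ _) (fun z hz => ?_) (fun z hz => ?_) hx hy
  · have hz0 : 0 < z := by linarith [hz.1]
    exact (hasDerivAt_mul_comp_mul_add_mul_rpow A B (-q) (hψ _ (mul_pos ha hz0))
      hz0).hasDerivWithinAt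
  · have hz0 : 0 < z := by linarith [hz.1]
    have hpow : |B * -q * z ^ (-q - 1)| ≤ B * q * 2 ^ (q + 1) := by
      rw [abs_mul, abs_mul, abs_neg, abs_of_nonneg hq, abs_of_nonneg hB,
        abs_of_pos (Real.rpow_pos_of_pos hz0 _), show -q - 1 = -(q + 1) by ring]
      gcongr
      exact rpow_neg_le_two_rpow hz.1 (by linarith)
    exact (abs_add_le _ _).trans (add_le_add (hC z hz) hpow)

lemma abs_mul_two_zpow_cube_mul_le {ψ : ℝ → ℝ} (hψ : ContinuousOn ψ (Ioi 0)) (ξ : ℝ) (l : ℤ)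
    {x : ℝ} (hx : x ∈ Icc (1 / 2 : ℝ) 2) :
    |ξ * ((2 : ℝ) ^ (-l)) ^ 2 * (2 : ℝ) ^ (-l) * ψ ((2 : ℝ) ^ (-l) * x)| ≤
      |ξ| * (2 : ℝ) ^ (-3 * l) *
        sSup ((fun r => |ψ r|) '' Icc ((2 : ℝ) ^ (-l - 1)) ((2 : ℝ) ^ (-l + 1))) := by
  have hcont : ContinuousOn (fun r => |ψ r|) (Icc ((2 : ℝ) ^ (-l - 1)) ((2 : ℝ) ^ (-l + 1))) :=
    (hψ.mono fun y hy => lt_of_lt_of_le (by positivity) hy.1).abs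
  have hcube : ((2 : ℝ) ^ (-l)) ^ 2 * (2 : ℝ) ^ (-l) = (2 : ℝ) ^ (-3 * l) := by
    rw [← pow_succ, ← zpow_natCast, ← zpow_mul]
    ring_nf
  rw [mul_assoc ξ, abs_mul, abs_mul, hcube, abs_of_pos (by positivity : (0 : ℝ) < 2 ^ (-3 * l))]
  gcongr
  exact hcont.le_sSup_image_Icc (two_zpow_mul_mem_Icc l hx)

lemma add_mul_le_three_eighths_mul {β ε lam b d : ℝ} (hβ : 0 < β) (hb : 0 ≤ b)
    (hb_le : b ≤ lam) (hd0 : 0 ≤ d) (hdM : d ≤ ε / (4 * β * (β + 1) * (β + 2) * 2 ^ (β + 3)))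
    (hd8 : d ≤ ε / 8) :
    (lam + b * (β * (β + 1)) * (β + 2) * 2 ^ (β + 2 + 1)) * d ≤ 3 / 8 * (ε * lam) := by
  set M := β * (β + 1) * (β + 2) * (2 : ℝ) ^ (β + 3)
  have hMd : M * d ≤ ε / 4 := by
    rw [le_div_iff₀ (by positivity)] at hdM
    linarith
  calc _ = lam * d + b * (M * d) := by rw [show β + 2 + 1 = β + 3 by ring]; ring
    _ ≤ lam * (ε / 8) + lam * (ε / 4) := by
      have hlam : 0 ≤ lam := hb.trans hb_le
      gcongr
    _ = 3 / 8 * (ε * lam) := by ring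

theorem stmt_10_general (n : ℕ) (β ε : ℝ) (l : ℤ)
    (ξ' : EuclideanSpace ℝ (Fin n)) (ξlast : ℝ)
    (φ φ' φ'' φ''' : ℝ → ℝ)
    (hβ : 0 < β)
    (hd1 : ∀ x > (0:ℝ), HasDerivAt φ (φ' x) x)
    (hd2 : ∀ x > (0:ℝ), HasDerivAt φ' (φ'' x) x)
    (hd3 : ∀ x > (0:ℝ), HasDerivAt φ'' (φ''' x) x)
    (hcont : ContinuousOn φ''' (Set.Ioi 0))
    (lam : ℝ)
    (hlam : lam = max (max ((2:ℝ) ^ (β * (l:ℝ))) ((2:ℝ) ^ (-l) * ‖ξ'‖))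
      (max (|ξlast| * (2:ℝ) ^ (-2 * l) *
              sSup ((fun r : ℝ => |φ'' r|) '' Set.Icc ((2:ℝ) ^ (-l - 1)) ((2:ℝ) ^ (-l + 1))))
           (|ξlast| * (2:ℝ) ^ (-3 * l) *
              sSup ((fun r : ℝ => |φ''' r|) '' Set.Icc ((2:ℝ) ^ (-l - 1)) ((2:ℝ) ^ (-l + 1))))))
    (g : ℝ → ℝ → ℝ)
    (hg : ∀ r θ : ℝ, g r θ = (2:ℝ) ^ (-l) * ‖ξ'‖ * r * Real.cos θ +
      ξlast * φ ((2:ℝ) ^ (-l) * r) + (2:ℝ) ^ (β * (l:ℝ)) * r ^ (-β))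
    (ε₁ : ℝ)
    (hε₁ : ε₁ = min (min (ε / (6 * β * (β + 1) * (2:ℝ) ^ (β + 2)))
      (ε / (4 * β * (β + 1) * (β + 2) * (2:ℝ) ^ (β + 3)))) (ε / 8))
    (r₀ θ₀ r θ : ℝ)
    (hr₀ : r₀ ∈ Set.Icc (1/2 : ℝ) 2)
    (hr : r ∈ Set.Icc (1/2 : ℝ) 2)
    (hclose_r : |r - r₀| < ε₁)
    (h₀ : ε * lam ≤ |deriv (fun r' => deriv (fun r'' => g r'' θ₀) r') r₀|) :
    ε * lam / 2 ≤ |deriv (fun r' => deriv (fun r'' => g r'' θ) r') r| := by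
  set a : ℝ := (2:ℝ) ^ (-l)
  set b : ℝ := (2:ℝ) ^ (β * (l:ℝ))
  have ha : 0 < a := by positivity
  have hb : 0 < b := by positivity
  have hb_le : b ≤ lam := hlam ▸ le_max_of_le_left (le_max_left _ _)
  have hφ''' : ∀ x ∈ Icc (1 / 2 : ℝ) 2, |ξlast * a ^ 2 * a * φ''' (a * x)| ≤ lam := fun x hx =>
    (abs_mul_two_zpow_cube_mul_le hcont ξlast l hx).trans
      (hlam ▸ le_max_of_le_right (le_max_right _ _))
  have hgrr : ∀ θ', ∀ x > 0, deriv (fun r' => deriv (fun r'' => g r'' θ') r') x =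
      ξlast * a ^ 2 * φ'' (a * x) + b * (β * (β + 1)) * x ^ (-(β + 2)) := fun θ' x hx => by
    rw [show (fun r'' => g r'' θ') = fun r => a * ‖ξ'‖ * Real.cos θ' * r + ξlast * φ (a * r) +
      b * r ^ (-β) from funext fun r => by rw [hg]; ring]
    exact deriv_deriv_mul_add_mul_comp_mul_add_mul_rpow_neg ha hd1 hd2 _ _ _ _ hx
  rw [hgrr θ₀ r₀ (by linarith [hr₀.1])] at h₀
  rw [hgrr θ r (by linarith [hr.1])]
  have hmvt := abs_le_abs_add_mul_of_mem_Icc_mul_comp_mul_add_mul_rpow_neg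
    (B := b * (β * (β + 1))) (q := β + 2)
    ha hd3 hφ''' (by positivity) (by positivity) hr₀ hr
  have hd : |r₀ - r| < ε₁ := abs_sub_comm r r₀ ▸ hclose_r
  have hd8 : |r₀ - r| < ε / 8 := hd.trans_le (hε₁ ▸ min_le_right _ _)
  have hdrift := add_mul_le_three_eighths_mul hβ hb.le hb_le (abs_nonneg _)
    (hd.le.trans (hε₁ ▸ (min_le_left _ _).trans (min_le_right _ _))) hd8.le
  have hεlam : 0 < ε * lam := mul_pos (by linarith [abs_nonneg (r₀ - r)]) (hb.trans_le hb_le)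
  linarith

theorem stmt_10 (n : ℕ) (β k₁ k₂ k₃ ε : ℝ) (l : ℤ)
    (ξ' : EuclideanSpace ℝ (Fin n)) (ξlast : ℝ)
    (φ φ' φ'' φ''' : ℝ → ℝ)
    (hβ : 0 < β)
    (hd1 : ∀ x > (0:ℝ), HasDerivAt φ (φ' x) x)
    (hd2 : ∀ x > (0:ℝ), HasDerivAt φ' (φ'' x) x)
    (hd3 : ∀ x > (0:ℝ), HasDerivAt φ'' (φ''' x) x)
    (hcont : ContinuousOn φ''' (Set.Ioi 0))
    (hsign : ∀ x > (0:ℝ), φ' x * φ'' x > 0)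
    (hk₁ : 0 < k₁) (hk₁₂ : k₁ ≤ k₂)
    (hbd : ∀ x > (0:ℝ), k₁ ≤ x * φ'' x / φ' x ∧ x * φ'' x / φ' x ≤ k₂)
    (hk₃ : 0 < k₃)
    (hbd3 : ∀ x > (0:ℝ), |x * φ''' x / φ'' x| ≤ k₃)
    (hε0 : 0 < ε)
    (hε : ε < min (min (1 / (2 * Real.sqrt 2)) (1 / (4 * k₂ * (3 * β + 7))))
      (min (β / ((4 + 3 * k₂) * (2:ℝ) ^ β)) (1 / (8 * k₂ * k₃ * (3 * β + 7)))))
    (lam : ℝ)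
    (hlam : lam = max (max ((2:ℝ) ^ (β * (l:ℝ))) ((2:ℝ) ^ (-l) * ‖ξ'‖))
      (max (|ξlast| * (2:ℝ) ^ (-2 * l) *
              sSup ((fun r : ℝ => |φ'' r|) '' Set.Icc ((2:ℝ) ^ (-l - 1)) ((2:ℝ) ^ (-l + 1))))
           (|ξlast| * (2:ℝ) ^ (-3 * l) *
              sSup ((fun r : ℝ => |φ''' r|) '' Set.Icc ((2:ℝ) ^ (-l - 1)) ((2:ℝ) ^ (-l + 1))))))
    (g : ℝ → ℝ → ℝ)
    (hg : ∀ r θ : ℝ, g r θ = (2:ℝ) ^ (-l) * ‖ξ'‖ * r * Real.cos θ +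
      ξlast * φ ((2:ℝ) ^ (-l) * r) + (2:ℝ) ^ (β * (l:ℝ)) * r ^ (-β))
    (ε₁ ε₂ : ℝ)
    (hε₁ : ε₁ = min (min (ε / (6 * β * (β + 1) * (2:ℝ) ^ (β + 2)))
      (ε / (4 * β * (β + 1) * (β + 2) * (2:ℝ) ^ (β + 3)))) (ε / 8))
    (hε₂ : ε₂ = ε / 8)
    (r₀ θ₀ r θ : ℝ)
    (hr₀ : r₀ ∈ Set.Icc (1/2 : ℝ) 2) (hθ₀ : θ₀ ∈ Set.Icc (0:ℝ) Real.pi)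
    (hr : r ∈ Set.Icc (1/2 : ℝ) 2) (hθ : θ ∈ Set.Icc (0:ℝ) Real.pi)
    (hclose_r : |r - r₀| < ε₁) (hclose_θ : |θ - θ₀| < ε₂)
    (h₀ : ε * lam ≤ |deriv (fun r' => deriv (fun r'' => g r'' θ₀) r') r₀|) :
    ε * lam / 2 ≤ |deriv (fun r' => deriv (fun r'' => g r'' θ) r') r| :=
  stmt_10_general n β ε l ξ' ξlast φ φ' φ'' φ''' hβ hd1 hd2 hd3 hcont lam hlam g hg ε₁ hε₁ r₀ θ₀ r θ
    hr₀ hr hclose_r h₀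
end
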